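/- Let Ω and Δ be finite nonempty sets and let G be a cyclic subgroup of Perm Ω × Perm Δ whose product action on Ω × Δ (given by (x,y) • (u,w) = (x u, y w)) is transitive. Then there exist a cyclic subgroup H of Perm Ω regular on Ω and a cyclic subgroup K of Perm Δ regular on Δ such that G = H × K (G equals the product subgroup {(h,k) : h ∈ H, k ∈ K}). In particular, the cardinalities of Ω and Δ are coprime. -/

import Mathlib

/-!
An abelian transitive permutation group is regular: an element fixing one point commutes with
elements moving that point anywhere, so it fixes everything. Both projections of the cyclic group
`G` are abelian and transitive, hence regular, and transitivity of `G` on `Ω × Δ` together with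
regularity of the projections forces `G` to be their full product. A product of two groups is
cyclic exactly when both factors are cyclic of coprime orders.
-/

/-- A permutation `e` is an automorphism of the digraph with adjacency `Adj`. -/
def IsDigraphAut {V : Type*} (Adj : V → V → Prop) (e : Equiv.Perm V) : Prop :=
  ∀ x y, Adj x y ↔ Adj (e x) (e y)

/-- The automorphism group of a digraph, as a subgroup of the permutation group. -/
def autGroup {V : Type*} (Adj : V → V → Prop) : Subgroup (Equiv.Perm V) where
  carrier := {e | IsDigraphAut Adj e}
  one_mem' := by intro x y; exact Iff.rfl
  mul_mem' := by
    intro a b ha hb x y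
    exact (hb x y).trans (ha (b x) (b y))
  inv_mem' := by
    intro a ha x y
    simpa using (ha (a⁻¹ x) (a⁻¹ y)).symm

/-- A digraph is arc-transitive if its automorphism group is transitive on arcs. -/
def ArcTransitive {V : Type*} (Adj : V → V → Prop) : Prop :=
  ∀ x y u v, Adj x y → Adj u v → ∃ e ∈ autGroup Adj, e x = u ∧ e y = v

/-- A subgroup of the permutation group of `V` is regular on `V`. -/
def IsRegularSub {V : Type*} (H : Subgroup (Equiv.Perm V)) : Prop :=
  ∀ u v : V, ∃! h : H, (h : Equiv.Perm V) u = v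

/-- A circulant: the automorphism group contains a regular cyclic subgroup. -/
def IsCirculant {V : Type*} (Adj : V → V → Prop) : Prop :=
  ∃ H : Subgroup (Equiv.Perm V), H ≤ autGroup Adj ∧ IsCyclic H ∧ IsRegularSub H

/-- A normal circulant: the automorphism group contains a regular cyclic subgroup
that is normal in the automorphism group. -/
def IsNormalCirculant {V : Type*} (Adj : V → V → Prop) : Prop :=
  ∃ H : Subgroup (Equiv.Perm V), H ≤ autGroup Adj ∧ IsCyclic H ∧ IsRegularSub H ∧
    ∀ e ∈ autGroup Adj, ∀ h ∈ H, e * h * e⁻¹ ∈ H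

/-- Tensor (direct) product of digraphs. -/
def tensorAdj {V₁ V₂ : Type*} (Adj₁ : V₁ → V₁ → Prop) (Adj₂ : V₂ → V₂ → Prop) :
    V₁ × V₂ → V₁ × V₂ → Prop :=
  fun p q => Adj₁ p.1 q.1 ∧ Adj₂ p.2 q.2

/-- Lexicographic product `Γ[Kbar_b]` with the edgeless digraph on `b` vertices. -/
def lexAdj {V : Type*} (Adj : V → V → Prop) (b : ℕ) : V × Fin b → V × Fin b → Prop :=
  fun p q => Adj p.1 q.1

/-- Digraph isomorphism. -/
def DigraphIso {V₁ V₂ : Type*} (Adj₁ : V₁ → V₁ → Prop) (Adj₂ : V₂ → V₂ → Prop) : Prop :=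
  ∃ e : V₁ ≃ V₂, ∀ x y, Adj₁ x y ↔ Adj₂ (e x) (e y)

/-- Connectedness: the reflexive–symmetric–transitive closure of adjacency
relates every pair of vertices. -/
def DigraphConnected {V : Type*} (Adj : V → V → Prop) : Prop :=
  ∀ u v : V, Relation.ReflTransGen (fun a b => Adj a b ∨ Adj b a) u v

/-- R-thick digraph: two distinct vertices with the same in- and out-neighbourhoods. -/
def RThick {V : Type*} (Adj : V → V → Prop) : Prop :=
  ∃ u v : V, u ≠ v ∧ (∀ w, Adj u w ↔ Adj v w) ∧ (∀ w, Adj w u ↔ Adj w v)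

/-- The directed 4-cycle on `ZMod 4`. -/
def C4Adj : ZMod 4 → ZMod 4 → Prop := fun x y => y - x = 1 ∨ y - x = 3

/-- Cayley digraph of a group `G` with connection set `S`. -/
def cayAdj (G : Type*) [Group G] (S : Set G) : G → G → Prop :=
  fun x y => y * x⁻¹ ∈ S

/-- The right-regular representation of `G` inside `Equiv.Perm G`. -/
def rightReg (G : Type*) [Group G] : Subgroup (Equiv.Perm G) where
  carrier := {e | ∃ g : G, ∀ x, e x = x * g}
  one_mem' := ⟨1, by simp⟩
  mul_mem' := by
    rintro a b ⟨g, hg⟩ ⟨h, hh⟩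
    exact ⟨h * g, fun x => by simp [Equiv.Perm.mul_apply, hh, hg, mul_assoc]⟩
  inv_mem' := by
    rintro a ⟨g, hg⟩
    refine ⟨g⁻¹, fun x => a.injective ?_⟩
    rw [show a (a⁻¹ x) = x from a.apply_symm_apply x, hg]
    simp

/-- Cayley digraph of `ZMod n` with connection set `S`. -/
def zcayAdj (n : ℕ) (S : Set (ZMod n)) : ZMod n → ZMod n → Prop :=
  fun x y => y - x ∈ S

/-- The translation subgroup of `Equiv.Perm (ZMod n)`. -/
def transSub (n : ℕ) : Subgroup (Equiv.Perm (ZMod n)) where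
  carrier := {e | ∃ g : ZMod n, ∀ x, e x = x + g}
  one_mem' := ⟨0, by simp⟩
  mul_mem' := by
    rintro a b ⟨g, hg⟩ ⟨h, hh⟩
    exact ⟨h + g, fun x => by simp [Equiv.Perm.mul_apply, hh, hg, add_assoc]⟩
  inv_mem' := by
    rintro a ⟨g, hg⟩
    refine ⟨-g, fun x => a.injective ?_⟩
    rw [show a (a⁻¹ x) = x from a.apply_symm_apply x, hg]
    simp

open Equiv

section Regular

variable {α : Type*} {H : Subgroup (Perm α)}

theorem Subgroup.eq_of_apply_eq_of_isMulCommutative [IsMulCommutative H]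
    (htrans : ∀ u v : α, ∃ h ∈ H, h u = v) {a b : Perm α} (ha : a ∈ H) (hb : b ∈ H) {u : α}
    (hab : a u = b u) : a = b := by
  ext x
  obtain ⟨h, hh, rfl⟩ := htrans u x
  calc a (h u) = (h * a) u := by rw [← setLike_mul_comm ha hh]; rfl
    _ = (b * h) u := by rw [Perm.mul_apply, hab, ← setLike_mul_comm hh hb]; rfl

theorem IsRegularSub.of_isMulCommutative [IsMulCommutative H]
    (htrans : ∀ u v : α, ∃ h ∈ H, h u = v) : IsRegularSub H := fun u v => by
  obtain ⟨h, hh, huv⟩ := htrans u v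
  exact ⟨⟨h, hh⟩, huv, fun k hk =>
    Subtype.ext (H.eq_of_apply_eq_of_isMulCommutative htrans k.2 hh (hk.trans huv.symm))⟩

theorem IsRegularSub.natCard_eq (hH : IsRegularSub H) (u : α) : Nat.card H = Nat.card α :=
  Nat.card_eq_of_bijective (fun h : H => (h : Perm α) u)
    ⟨fun _ _ h => (hH u _).unique rfl h.symm, fun v => (hH u v).exists⟩

end Regular

section Product

variable {Ω Δ : Type*} {G : Subgroup (Perm Ω × Perm Δ)}
  (htrans : ∀ u v : Ω × Δ, ∃ g ∈ G, g.1 u.1 = v.1 ∧ g.2 u.2 = v.2)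
include htrans

theorem exists_mem_map_fst_apply_eq [Nonempty Δ] (u v : Ω) :
    ∃ h ∈ G.map (MonoidHom.fst _ _), h u = v := by
  obtain ⟨w⟩ := ‹Nonempty Δ›
  obtain ⟨g, hg, huv, -⟩ := htrans (u, w) (v, w)
  exact ⟨g.1, ⟨g, hg, rfl⟩, huv⟩

theorem exists_mem_map_snd_apply_eq [Nonempty Ω] (u v : Δ) :
    ∃ k ∈ G.map (MonoidHom.snd _ _), k u = v := by
  obtain ⟨w⟩ := ‹Nonempty Ω›
  obtain ⟨g, hg, -, huv⟩ := htrans (w, u) (w, v)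
  exact ⟨g.2, ⟨g, hg, rfl⟩, huv⟩

theorem eq_prod_map_fst_map_snd [Nonempty Ω] [Nonempty Δ]
    (hH : IsRegularSub (G.map (MonoidHom.fst _ _)))
    (hK : IsRegularSub (G.map (MonoidHom.snd _ _))) :
    G = (G.map (MonoidHom.fst _ _)).prod (G.map (MonoidHom.snd _ _)) := by
  refine le_antisymm (fun g hg => ⟨⟨g, hg, rfl⟩, ⟨g, hg, rfl⟩⟩) ?_
  rintro ⟨h, k⟩ ⟨hh, hk⟩
  obtain ⟨u⟩ := ‹Nonempty Ω›
  obtain ⟨w⟩ := ‹Nonempty Δ›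
  obtain ⟨g, hg, hgu, hgw⟩ := htrans (u, w) (h u, k w)
  have hgh : g.1 = h := congrArg Subtype.val
    ((hH u (h u)).unique (y₁ := ⟨g.1, g, hg, rfl⟩) (y₂ := ⟨h, hh⟩) hgu rfl)
  have hgk : g.2 = k := congrArg Subtype.val
    ((hK w (k w)).unique (y₁ := ⟨g.2, g, hg, rfl⟩) (y₂ := ⟨k, hk⟩) hgw rfl)
  rwa [← hgh, ← hgk]

end Product

theorem stmt11 {Ω Δ : Type*} [Fintype Ω] [Fintype Δ] [Nonempty Ω] [Nonempty Δ]
    (G : Subgroup (Equiv.Perm Ω × Equiv.Perm Δ)) (hcyc : IsCyclic G)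
    (htrans : ∀ u v : Ω × Δ, ∃ g ∈ G, g.1 u.1 = v.1 ∧ g.2 u.2 = v.2) :
    (∃ (H : Subgroup (Equiv.Perm Ω)) (K : Subgroup (Equiv.Perm Δ)),
      IsCyclic H ∧ IsRegularSub H ∧ IsCyclic K ∧ IsRegularSub K ∧ G = H.prod K) ∧
    Nat.Coprime (Fintype.card Ω) (Fintype.card Δ) := by
  set H := G.map (MonoidHom.fst _ _)
  set K := G.map (MonoidHom.snd _ _)
  have hH : IsRegularSub H :=
    IsRegularSub.of_isMulCommutative (exists_mem_map_fst_apply_eq htrans)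
  have hK : IsRegularSub K :=
    IsRegularSub.of_isMulCommutative (exists_mem_map_snd_apply_eq htrans)
  have hGHK : G = H.prod K := eq_prod_map_fst_map_snd htrans hH hK
  obtain ⟨hcycH, hcycK, hcop⟩ :=
    Group.isCyclic_prod_iff.mp ((H.prodEquiv K).isCyclic.mp (hGHK ▸ hcyc))
  obtain ⟨u⟩ := ‹Nonempty Ω›
  obtain ⟨w⟩ := ‹Nonempty Δ›
  rw [hH.natCard_eq u, hK.natCard_eq w, Nat.card_eq_fintype_card, Nat.card_eq_fintype_card]
    at hcop
  exact ⟨⟨H, K, hcycH, hH, hcycK, hK, hGHK⟩, hcop⟩
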